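/- On ℝ³ with coordinates (y,z,p), the 1-forms σ₁ = sinh(y)cosh(z) dp − sinh(z) dy, σ₂ = −sinh(y)sinh(z) dp + cosh(z) dy, σ₃ = −dz − cosh(y) dp satisfy the structure equations dσ₁ = −σ₂∧σ₃, dσ₂ = −σ₁∧σ₃, dσ₃ = σ₁∧σ₂ at every point of ℝ³. -/

import Mathlib

/-!
STATEMENT 2: On ℝ³ with coordinates (y,z,p), the 1-forms
σ₁ = sinh(y)cosh(z) dp − sinh(z) dy, σ₂ = −sinh(y)sinh(z) dp + cosh(z) dy,
σ₃ = −dz − cosh(y) dp satisfy dσ₁ = −σ₂∧σ₃, dσ₂ = −σ₁∧σ₃, dσ₃ = σ₁∧σ₂.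
-/

noncomputable section

open Real

/-- the coordinate differentials dy, dz, dp on ℝ³ with coordinates (y,z,p) -/
def dc (i : Fin 3) : (Fin 3 → ℝ) →L[ℝ] ℝ := ContinuousLinearMap.proj i

/-- exterior derivative of a 1-form -/
def extd {n : ℕ} (ω : (Fin n → ℝ) → ((Fin n → ℝ) →L[ℝ] ℝ)) :
    (Fin n → ℝ) → (Fin n → ℝ) → (Fin n → ℝ) → ℝ :=
  fun a u v => fderiv ℝ (fun x => ω x v) a u - fderiv ℝ (fun x => ω x u) a v

/-- wedge product of two 1-forms -/
def wedge {n : ℕ} (ω η : (Fin n → ℝ) → ((Fin n → ℝ) →L[ℝ] ℝ)) :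
    (Fin n → ℝ) → (Fin n → ℝ) → (Fin n → ℝ) → ℝ :=
  fun a u v => ω a u * η a v - ω a v * η a u

/-- σ₁ = sinh(y)cosh(z) dp − sinh(z) dy -/
def σ₁ : (Fin 3 → ℝ) → ((Fin 3 → ℝ) →L[ℝ] ℝ) :=
  fun a => (sinh (a 0) * cosh (a 1)) • dc 2 - sinh (a 1) • dc 0

/-- σ₂ = −sinh(y)sinh(z) dp + cosh(z) dy -/
def σ₂ : (Fin 3 → ℝ) → ((Fin 3 → ℝ) →L[ℝ] ℝ) :=
  fun a => -((sinh (a 0) * sinh (a 1)) • dc 2) + cosh (a 1) • dc 0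

/-- σ₃ = −dz − cosh(y) dp -/
def σ₃ : (Fin 3 → ℝ) → ((Fin 3 → ℝ) →L[ℝ] ℝ) :=
  fun a => -dc 1 - cosh (a 0) • dc 2

/-!
The exterior derivative of a 1-form `ω` at `a` is the antisymmetrisation `(u, v) ↦ ω' u v - ω' v u`
of its total derivative `ω'`, so each `dσᵢ` is read off from the derivatives of the coefficients
`sinh`, `cosh`. Expanded in the coordinates of `u` and `v`, the first two structure equations are
then ring identities in `sinh`, `cosh`, and the third one is `cosh² z - sinh² z = 1`.
-/

theorem extd_eq_of_hasFDerivAt {n : ℕ} {ω : (Fin n → ℝ) → ((Fin n → ℝ) →L[ℝ] ℝ)}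
    {ω' : (Fin n → ℝ) →L[ℝ] (Fin n → ℝ) →L[ℝ] ℝ} {a : Fin n → ℝ} (h : HasFDerivAt ω ω' a)
    (u v : Fin n → ℝ) : extd ω a u v = ω' u v - ω' v u := by
  have hω_apply (w : Fin n → ℝ) : HasFDerivAt (fun x => ω x w) (ω'.flip w) a :=
    (ContinuousLinearMap.apply ℝ ℝ w).hasFDerivAt.comp a h
  simp only [extd, (hω_apply _).fderiv, ContinuousLinearMap.flip_apply]

theorem hasFDerivAt_comp_apply {n : ℕ} {f : ℝ → ℝ} {f' : ℝ} {a : Fin n → ℝ}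
    (i : Fin n) (hf : HasDerivAt f f' (a i)) :
    HasFDerivAt (fun x : Fin n → ℝ => f (x i))
      (f' • (ContinuousLinearMap.proj i : (Fin n → ℝ) →L[ℝ] ℝ)) a :=
  hf.comp_hasFDerivAt a (hasFDerivAt_apply i a)

theorem extd_σ₁ (a u v : Fin 3 → ℝ) :
    extd σ₁ a u v =
      cosh (a 0) * cosh (a 1) * (u 0 * v 2 - v 0 * u 2)
        + sinh (a 0) * sinh (a 1) * (u 1 * v 2 - v 1 * u 2)
        - cosh (a 1) * (u 1 * v 0 - v 1 * u 0) := by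
  have hσ : HasFDerivAt σ₁ _ a := (((hasFDerivAt_comp_apply 0 (hasDerivAt_sinh _)).mul
    (hasFDerivAt_comp_apply 1 (hasDerivAt_cosh _))).smul_const (dc 2)).sub
    ((hasFDerivAt_comp_apply 1 (hasDerivAt_sinh _)).smul_const (dc 0))
  rw [extd_eq_of_hasFDerivAt hσ]
  simp only [dc, sub_apply, add_apply, smul_apply, smul_eq_mul,
    ContinuousLinearMap.smulRight_apply, ContinuousLinearMap.proj_apply]
  ring

theorem extd_σ₂ (a u v : Fin 3 → ℝ) :
    extd σ₂ a u v =
      -(cosh (a 0) * sinh (a 1) * (u 0 * v 2 - v 0 * u 2))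
        - sinh (a 0) * cosh (a 1) * (u 1 * v 2 - v 1 * u 2)
        + sinh (a 1) * (u 1 * v 0 - v 1 * u 0) := by
  have hσ : HasFDerivAt σ₂ _ a := ((((hasFDerivAt_comp_apply 0 (hasDerivAt_sinh _)).mul
    (hasFDerivAt_comp_apply 1 (hasDerivAt_sinh _))).smul_const (dc 2)).neg).add
    ((hasFDerivAt_comp_apply 1 (hasDerivAt_cosh _)).smul_const (dc 0))
  rw [extd_eq_of_hasFDerivAt hσ]
  simp only [dc, add_apply, neg_apply, smul_apply, smul_eq_mul,
    ContinuousLinearMap.smulRight_apply, ContinuousLinearMap.proj_apply]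
  ring

theorem extd_σ₃ (a u v : Fin 3 → ℝ) :
    extd σ₃ a u v = -(sinh (a 0) * (u 0 * v 2 - v 0 * u 2)) := by
  have hσ : HasFDerivAt σ₃ _ a := (hasFDerivAt_const (-dc 1) a).sub
    ((hasFDerivAt_comp_apply 0 (hasDerivAt_cosh _)).smul_const (dc 2))
  rw [extd_eq_of_hasFDerivAt hσ]
  simp only [dc, zero_sub, neg_apply, smul_apply, smul_eq_mul,
    ContinuousLinearMap.smulRight_apply, ContinuousLinearMap.proj_apply]
  ring

theorem hyperboloid_coframe_structure_equations :
    ∀ (a u v : Fin 3 → ℝ),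
      extd σ₁ a u v = -(wedge σ₂ σ₃ a u v) ∧
      extd σ₂ a u v = -(wedge σ₁ σ₃ a u v) ∧
      extd σ₃ a u v = wedge σ₁ σ₂ a u v := by
  intro a u v
  simp only [extd_σ₁, extd_σ₂, extd_σ₃, wedge, σ₁, σ₂, σ₃, dc, sub_apply, add_apply, neg_apply,
    smul_apply, ContinuousLinearMap.proj_apply, smul_eq_mul]
  refine ⟨by ring, by ring, ?_⟩
  linear_combination (u 0 * v 2 - u 2 * v 0) * sinh (a 0) * cosh_sq_sub_sinh_sq (a 1)

end
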